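/- The drinker paradox is derivable from double negation elimination in minimal logic: if for every formula β one has ∅ ⊢ ¬¬β ⇒ β, then for every formula α one has ∅ ⊢ V x (α ⇒ Λ x α), where x denotes the fixed variable var 0. -/

import Mathlib

/-- Variables, indexed by natural numbers. -/
structure FOVar where
  idx : ℕ
deriving DecidableEq

/-- Function symbols: an index and an arity. -/
structure FOFunc where
  idx : ℕ
  arity : ℕ
deriving DecidableEq

/-- Relation symbols: an index and an arity. -/
structure FORel where
  idx : ℕ
  arity : ℕ
deriving DecidableEq

/-- Length-indexed vectors. -/
inductive Vec (A : Type) : ℕ → Type where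
  | nil : Vec A 0
  | cons : ∀ {n}, A → Vec A n → Vec A (n + 1)

/-- A predicate holds on every element of a vector. -/
inductive Vec.All {A : Type} (P : A → Prop) : ∀ {n}, Vec A n → Prop where
  | nil : Vec.All P Vec.nil
  | cons : ∀ {n x} {xs : Vec A n}, P x → Vec.All P xs → Vec.All P (Vec.cons x xs)

/-- First-order terms. -/
inductive Term : Type where
  | varterm : FOVar → Term
  | functerm : (f : FOFunc) → Vec Term f.arity → Term

/-- First-order formulas. -/
inductive Formula : Type where
  | atom : (r : FORel) → Vec Term r.arity → Formula
  | imp : Formula → Formula → Formula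
  | and : Formula → Formula → Formula
  | or : Formula → Formula → Formula
  | all : FOVar → Formula → Formula
  | ex : FOVar → Formula → Formula

/-- The variable x does not occur in a term. -/
inductive NotInTerm (x : FOVar) : Term → Prop where
  | varterm : ∀ {y}, x ≠ y → NotInTerm x (Term.varterm y)
  | functerm : ∀ {f} {us : Vec Term f.arity},
      Vec.All (NotInTerm x) us → NotInTerm x (Term.functerm f us)

/-- The variable x does not occur in any term of a vector. -/
def NotInTerms {n : ℕ} (x : FOVar) (ts : Vec Term n) : Prop :=
  Vec.All (NotInTerm x) ts

/-- The variable x is not free in a formula. -/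
inductive NotFreeIn : FOVar → Formula → Prop where
  | atom : ∀ {x r} {ts : Vec Term r.arity},
      NotInTerms x ts → NotFreeIn x (Formula.atom r ts)
  | imp : ∀ {x α β}, NotFreeIn x α → NotFreeIn x β → NotFreeIn x (Formula.imp α β)
  | and : ∀ {x α β}, NotFreeIn x α → NotFreeIn x β → NotFreeIn x (Formula.and α β)
  | or : ∀ {x α β}, NotFreeIn x α → NotFreeIn x β → NotFreeIn x (Formula.or α β)
  | all_self : ∀ x α, NotFreeIn x (Formula.all x α)
  | ex_self : ∀ x α, NotFreeIn x (Formula.ex x α)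
  | all : ∀ {x α} (y : FOVar), NotFreeIn x α → NotFreeIn x (Formula.all y α)
  | ex : ∀ {x α} (y : FOVar), NotFreeIn x α → NotFreeIn x (Formula.ex y α)

mutual
/-- ⟨u⟩[x/t]≡v : substituting t for x in the term u yields v. -/
inductive TermSub : Term → FOVar → Term → Term → Prop where
  | var_eq : ∀ {x t}, TermSub (Term.varterm x) x t t
  | var_ne : ∀ {x t y}, x ≠ y → TermSub (Term.varterm y) x t (Term.varterm y)
  | functerm : ∀ {x t f} {us vs : Vec Term f.arity},
      TermsSub us x t vs → TermSub (Term.functerm f us) x t (Term.functerm f vs)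

/-- [us][x/t]≡vs : componentwise substitution in vectors of terms. -/
inductive TermsSub : ∀ {n}, Vec Term n → FOVar → Term → Vec Term n → Prop where
  | nil : ∀ {x t}, TermsSub Vec.nil x t Vec.nil
  | cons : ∀ {x t u v n} {us vs : Vec Term n},
      TermSub u x t v → TermsSub us x t vs →
      TermsSub (Vec.cons u us) x t (Vec.cons v vs)
end

/-- α[x/t]≡β : substituting t for all free occurrences of x in α yields β. -/
inductive FormulaSub : Formula → FOVar → Term → Formula → Prop where
  | ident : ∀ α x, FormulaSub α x (Term.varterm x) α
  | notfree : ∀ {α x t}, NotFreeIn x α → FormulaSub α x t α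
  | atom : ∀ {x t} (r : FORel) {us vs : Vec Term r.arity},
      TermsSub us x t vs → FormulaSub (Formula.atom r us) x t (Formula.atom r vs)
  | imp : ∀ {α α' β β' x t}, FormulaSub α x t α' → FormulaSub β x t β' →
      FormulaSub (Formula.imp α β) x t (Formula.imp α' β')
  | and : ∀ {α α' β β' x t}, FormulaSub α x t α' → FormulaSub β x t β' →
      FormulaSub (Formula.and α β) x t (Formula.and α' β')
  | or : ∀ {α α' β β' x t}, FormulaSub α x t α' → FormulaSub β x t β' →
      FormulaSub (Formula.or α β) x t (Formula.or α' β')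
  | all_self : ∀ {t} x α, FormulaSub (Formula.all x α) x t (Formula.all x α)
  | ex_self : ∀ {t} x α, FormulaSub (Formula.ex x α) x t (Formula.ex x α)
  | all : ∀ {α β x y t}, x ≠ y → NotInTerm y t → FormulaSub α x t β →
      FormulaSub (Formula.all y α) x t (Formula.all y β)
  | ex : ∀ {α β x y t}, x ≠ y → NotInTerm y t → FormulaSub α x t β →
      FormulaSub (Formula.ex y α) x t (Formula.ex y β)

/-- The term t is free for the variable x in a formula. -/
inductive FreeFor (t : Term) (x : FOVar) : Formula → Prop where
  | notfree : ∀ {α}, NotFreeIn x α → FreeFor t x α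
  | atom : ∀ r us, FreeFor t x (Formula.atom r us)
  | imp : ∀ {α β}, FreeFor t x α → FreeFor t x β → FreeFor t x (Formula.imp α β)
  | and : ∀ {α β}, FreeFor t x α → FreeFor t x β → FreeFor t x (Formula.and α β)
  | or : ∀ {α β}, FreeFor t x α → FreeFor t x β → FreeFor t x (Formula.or α β)
  | all_self : ∀ α, FreeFor t x (Formula.all x α)
  | ex_self : ∀ α, FreeFor t x (Formula.ex x α)
  | all : ∀ {α y}, NotInTerm y t → FreeFor t x α → FreeFor t x (Formula.all y α)
  | ex : ∀ {α y}, NotInTerm y t → FreeFor t x α → FreeFor t x (Formula.ex y α)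

/-- The variable x appears nowhere (free or bound) in a formula. -/
inductive FreshIn (x : FOVar) : Formula → Prop where
  | atom : ∀ {r} {ts : Vec Term r.arity}, NotInTerms x ts → FreshIn x (Formula.atom r ts)
  | imp : ∀ {α β}, FreshIn x α → FreshIn x β → FreshIn x (Formula.imp α β)
  | and : ∀ {α β}, FreshIn x α → FreshIn x β → FreshIn x (Formula.and α β)
  | or : ∀ {α β}, FreshIn x α → FreshIn x β → FreshIn x (Formula.or α β)
  | all : ∀ {α y}, y ≠ x → FreshIn x α → FreshIn x (Formula.all y α)
  | ex : ∀ {α y}, y ≠ x → FreshIn x α → FreshIn x (Formula.ex y α)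

/-- Formula equivalence: equality up to renaming of bound variables. -/
inductive FormulaEquiv : Formula → Formula → Prop where
  | atom : ∀ r ts, FormulaEquiv (Formula.atom r ts) (Formula.atom r ts)
  | imp : ∀ {α β α' β'}, FormulaEquiv α α' → FormulaEquiv β β' →
      FormulaEquiv (Formula.imp α β) (Formula.imp α' β')
  | and : ∀ {α β α' β'}, FormulaEquiv α α' → FormulaEquiv β β' →
      FormulaEquiv (Formula.and α β) (Formula.and α' β')
  | or : ∀ {α β α' β'}, FormulaEquiv α α' → FormulaEquiv β β' →
      FormulaEquiv (Formula.or α β) (Formula.or α' β')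
  | all : ∀ {α α'} (x : FOVar), FormulaEquiv α α' → FormulaEquiv (Formula.all x α) (Formula.all x α')
  | ex : ∀ {α α'} (x : FOVar), FormulaEquiv α α' → FormulaEquiv (Formula.ex x α) (Formula.ex x α')
  | all_rename : ∀ {α β β' x y}, NotFreeIn y α →
      FormulaSub α x (Term.varterm y) β → FormulaEquiv β β' →
      FormulaEquiv (Formula.all x α) (Formula.all y β')
  | ex_rename : ∀ {α β β' x y}, NotFreeIn y α →
      FormulaSub α x (Term.varterm y) β → FormulaEquiv β β' →
      FormulaEquiv (Formula.ex x α) (Formula.ex y β')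
  | all_rename' : ∀ {α α' β' x y}, FormulaEquiv α α' → NotFreeIn y α' →
      FormulaSub α' x (Term.varterm y) β' →
      FormulaEquiv (Formula.all x α) (Formula.all y β')
  | ex_rename' : ∀ {α α' β' x y}, FormulaEquiv α α' → NotFreeIn y α' →
      FormulaSub α' x (Term.varterm y) β' →
      FormulaEquiv (Formula.ex x α) (Formula.ex y β')

/-- Natural deduction for minimal first-order logic. -/
inductive Deduction : Set Formula → Formula → Prop where
  | assume : ∀ (α : Formula), Deduction {α} α
  | close : ∀ {Γ Δ : Set Formula} {α}, Γ ⊆ Δ → Deduction Γ α → Deduction Δ α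
  | arrowintro : ∀ {Γ β} (α : Formula), Deduction Γ β →
      Deduction (Γ \ {α}) (Formula.imp α β)
  | arrowelim : ∀ {Γ₁ Γ₂ α β}, Deduction Γ₁ (Formula.imp α β) → Deduction Γ₂ α →
      Deduction (Γ₁ ∪ Γ₂) β
  | conjintro : ∀ {Γ₁ Γ₂ α β}, Deduction Γ₁ α → Deduction Γ₂ β →
      Deduction (Γ₁ ∪ Γ₂) (Formula.and α β)
  | conjelim : ∀ {Γ₁ Γ₂ α β γ}, Deduction Γ₁ (Formula.and α β) → Deduction Γ₂ γ →
      Deduction (Γ₁ ∪ (Γ₂ \ {α, β})) γ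
  | disjintro1 : ∀ {Γ α} (β : Formula), Deduction Γ α → Deduction Γ (Formula.or α β)
  | disjintro2 : ∀ {Γ β} (α : Formula), Deduction Γ β → Deduction Γ (Formula.or α β)
  | disjelim : ∀ {Γ₁ Γ₂ Γ₃ α β γ}, Deduction Γ₁ (Formula.or α β) →
      Deduction Γ₂ γ → Deduction Γ₃ γ →
      Deduction (Γ₁ ∪ (Γ₂ \ {α}) ∪ (Γ₃ \ {β})) γ
  | univintro : ∀ {Γ α} (x : FOVar), (∀ γ ∈ Γ, NotFreeIn x γ) →
      Deduction Γ α → Deduction Γ (Formula.all x α)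
  | univelim : ∀ {Γ α x β} (t : Term), FormulaSub α x t β →
      Deduction Γ (Formula.all x α) → Deduction Γ β
  | existintro : ∀ {Γ α β} (t : Term) (x : FOVar), FormulaSub α x t β →
      Deduction Γ β → Deduction Γ (Formula.ex x α)
  | existelim : ∀ {Γ₁ Γ₂ α β x}, NotFreeIn x β → (∀ γ ∈ Γ₂ \ {α}, NotFreeIn x γ) →
      Deduction Γ₁ (Formula.ex x α) → Deduction Γ₂ β →
      Deduction (Γ₁ ∪ (Γ₂ \ {α})) β

/-- ⊥: the atom of a fixed nullary relation symbol. -/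
def Formula.bot : Formula := Formula.atom ⟨0, 0⟩ Vec.nil

/-- ¬α is α ⇒ ⊥. -/
def Formula.neg (α : Formula) : Formula := Formula.imp α Formula.bot

theorem NotFreeIn.bot (x : FOVar) : NotFreeIn x Formula.bot :=
  NotFreeIn.atom Vec.All.nil

namespace Deduction

variable {Γ : Set Formula} {α β : Formula}

theorem of_mem (h : α ∈ Γ) : Deduction Γ α :=
  close (Set.singleton_subset_iff.2 h) (assume α)

theorem mp (hf : Deduction Γ (Formula.imp α β)) (ha : Deduction Γ α) : Deduction Γ β :=
  close (Set.union_self Γ).subset (arrowelim hf ha)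

theorem imp_intro (h : Deduction (insert α Γ) β) : Deduction Γ (Formula.imp α β) :=
  close (Set.sdiff_singleton_subset_iff.2 subset_rfl) (arrowintro α h)

theorem ex_intro_self (x : FOVar) (h : Deduction Γ α) : Deduction Γ (Formula.ex x α) :=
  existintro (Term.varterm x) x (FormulaSub.ident α x) h

theorem of_dne (hdne : Deduction ∅ (Formula.imp (Formula.neg (Formula.neg β)) β))
    (h : Deduction Γ (Formula.neg (Formula.neg β))) : Deduction Γ β :=
  close (Set.empty_union Γ).subset (arrowelim hdne h)

theorem by_contra_of_dne (hdne : Deduction ∅ (Formula.imp (Formula.neg (Formula.neg β)) β))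
    (h : Deduction (insert (Formula.neg β) Γ) Formula.bot) : Deduction Γ β :=
  of_dne hdne (imp_intro h)

theorem exfalso_of_dne (hdne : Deduction ∅ (Formula.imp (Formula.neg (Formula.neg β)) β))
    (h : Deduction Γ Formula.bot) : Deduction Γ β :=
  by_contra_of_dne hdne (close (Set.subset_insert _ Γ) h)

/-- Under `¬D`, with `D` the drinker formula, `α` holds: a counterexample `¬α` would make
`α ⇒ Λ x α` hold vacuously. Hence `Λ x α` holds, since `x` is bound in `¬D`, and so `D` does. -/
theorem drinker_of_dne (hdne : ∀ β : Formula,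
      Deduction ∅ (Formula.imp (Formula.neg (Formula.neg β)) β)) (x : FOVar) (α : Formula) :
    Deduction ∅ (Formula.ex x (Formula.imp α (Formula.all x α))) := by
  set D := Formula.ex x (Formula.imp α (Formula.all x α))
  refine by_contra_of_dne (hdne D) (close (Set.singleton_subset_iff.2 (Set.mem_insert _ _)) ?_)
  have hα : Deduction {Formula.neg D} α := by
    have hnD : Formula.neg D ∈ insert (Formula.neg α) {Formula.neg D} :=
      Set.mem_insert_of_mem _ (Set.mem_singleton _)
    refine by_contra_of_dne (hdne α) (mp (of_mem hnD) (ex_intro_self x (imp_intro ?_)))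
    exact exfalso_of_dne (hdne _) (mp (α := α)
      (of_mem (Set.mem_insert_of_mem _ (Set.mem_insert _ _))) (of_mem (Set.mem_insert _ _)))
  have hall : Deduction {Formula.neg D} (Formula.all x α) := by
    refine univintro x ?_ hα
    rintro γ rfl
    exact NotFreeIn.imp (NotFreeIn.ex_self x _) (NotFreeIn.bot x)
  have hD : Deduction {Formula.neg D} D :=
    ex_intro_self x (imp_intro (close (Set.subset_insert _ _) hall))
  exact mp (of_mem (Set.mem_singleton _)) hD

end Deduction

/-- The drinker paradox is derivable from double negation elimination. -/
theorem dne_implies_dp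
    (hdne : ∀ β : Formula,
      Deduction ∅ (Formula.imp (Formula.neg (Formula.neg β)) β)) :
    ∀ α : Formula,
      Deduction ∅ (Formula.ex (FOVar.mk 0)
        (Formula.imp α (Formula.all (FOVar.mk 0) α))) :=
  Deduction.drinker_of_dne hdne (FOVar.mk 0)
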